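/- arXiv:2104.01186 — 2 statements merged into one kernel-verified Lean document; each statement's English description precedes it below -/
import Mathlib

section
/- The generating function A*(x) counting by semilength the Dyck paths avoiding UUU and DUD and starting with UUD (or empty) satisfies the functional equation A*(x) = 1 + x^2 A*(x) / (1 - x^2 A*(x)). -/
/-- Every prefix of the path has nonnegative sum (the path stays weakly above the x-axis). -/
def NonnegPrefixes (w : List ℤ) : Prop := ∀ p ∈ w.inits, 0 ≤ p.sum

/-- A Dyck word: steps U = 1 and D = -1, nonnegative prefixes, ending at height 0. -/
def IsDyckWord (w : List ℤ) : Prop :=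
  (∀ s ∈ w, s = 1 ∨ s = -1) ∧ NonnegPrefixes w ∧ w.sum = 0

/-- A Motzkin path: steps U = 1, F = 0, D = -1, nonnegative prefixes, ending at height 0. -/
def IsMotzkinWord (w : List ℤ) : Prop :=
  (∀ s ∈ w, s = 1 ∨ s = 0 ∨ s = -1) ∧ NonnegPrefixes w ∧ w.sum = 0

/-- A Dyck meander with catastrophes: steps U = 1, D = -1, D_i = -i (i ≥ 2),
nonnegative, and every catastrophe step D_i (i ≥ 2) lands exactly at height 0. -/
def IsDyckMeanderCat (w : List ℤ) : Prop :=
  (∀ s ∈ w, s = 1 ∨ s ≤ -1) ∧ NonnegPrefixes w ∧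
    ∀ i, i < w.length → w.getD i 0 ≤ -2 → (w.take (i+1)).sum = 0

/-- A Motzkin meander with catastrophes: steps U = 1, F = 0, D = -1, D_i = -i (i ≥ 2),
nonnegative, every catastrophe landing exactly at height 0. -/
def IsMotzkinMeanderCat (w : List ℤ) : Prop :=
  (∀ s ∈ w, s ≤ 1) ∧ NonnegPrefixes w ∧
    ∀ i, i < w.length → w.getD i 0 ≤ -2 → (w.take (i+1)).sum = 0

def IsDyckExcursionCat (w : List ℤ) : Prop := IsDyckMeanderCat w ∧ w.sum = 0

def IsMotzkinExcursionCat (w : List ℤ) : Prop := IsMotzkinMeanderCat w ∧ w.sum = 0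

/-- The factor `pat` occurs in `w` starting at position `i`. -/
def OccursAt (pat w : List ℤ) (i : ℕ) : Prop := pat <+: w.drop i

/-- `w` has no occurrence of the factor `pat`. -/
def Avoids (pat w : List ℤ) : Prop := ∀ i, ¬ OccursAt pat w i

/-- `w` has no occurrence of `pat` starting at height h > 0. -/
def AvoidsAtPosHeight (pat w : List ℤ) : Prop :=
  ∀ i, OccursAt pat w i → (w.take i).sum ≤ 0

/-- `w` has no occurrence of `pat` starting at height h ≥ 2. -/
def AvoidsAtHeightGe2 (pat w : List ℤ) : Prop :=
  ∀ i, OccursAt pat w i → (w.take i).sum < 2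

def pUUU : List ℤ := [1, 1, 1]
def pDUD : List ℤ := [-1, 1, -1]
def pUUD : List ℤ := [1, 1, -1]
def pUD : List ℤ := [1, -1]
def pDU : List ℤ := [-1, 1]

/-!
Replacing every `U` of a Dyck word by `UUD` (and keeping every `D`) maps the Dyck words of
semilength `k` bijectively onto the paths of the family of semilength `2k`: a path avoiding
`UUU` and `DUD` that starts with `UUD` has all its runs of `U` of length exactly two, each followed
by a `D`. The first-return decomposition of Dyck words therefore gives
`a (n + 2) = ∑_{i + j = n} a i * a j` for the coefficients of `A`, that is `A = 1 + x² A²`,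
which is the stated equation since it says `A (1 - x² A) = 1`.
-/

open DyckStep

def inflateStep : DyckStep → List ℤ
  | U => [1, 1, -1]
  | D => [-1]

def inflate (s : List DyckStep) : List ℤ := s.flatMap inflateStep

@[simp] lemma inflate_nil : inflate [] = [] := rfl

@[simp] lemma inflate_cons (a : DyckStep) (s : List DyckStep) :
    inflate (a :: s) = inflateStep a ++ inflate s := rfl

@[simp] lemma inflate_append (s t : List DyckStep) :
    inflate (s ++ t) = inflate s ++ inflate t := List.flatMap_append

lemma inflate_injective : Function.Injective inflate := by
  intro s t h
  induction s generalizing t with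
  | nil => cases t with
    | nil => rfl
    | cons b t => cases b <;> simp [inflateStep] at h
  | cons a s ih => cases t with
    | nil => cases a <;> simp [inflateStep] at h
    | cons b t => cases a <;> cases b <;> simp [inflateStep] at h ⊢ <;> exact ih h

lemma sum_inflate (s : List DyckStep) : (inflate s).sum = (s.count U : ℤ) - s.count D := by
  induction s with
  | nil => simp
  | cons a s ih => cases a <;> simp [inflateStep, ih] <;> ring

lemma length_inflate (s : List DyckStep) : (inflate s).length = 3 * s.count U + s.count D := by
  induction s with
  | nil => simp
  | cons a s ih => cases a <;> simp [inflateStep, ih] <;> ring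

lemma forall_mem_inits_concat {α : Type*} {P : List α → Prop} (l : List α) (a : α) :
    (∀ t ∈ (l ++ [a]).inits, P t) ↔ (∀ t ∈ l.inits, P t) ∧ P (l ++ [a]) := by
  simp [List.inits_append, or_imp, forall_and]

lemma forall_take_iff_forall_mem_inits {α : Type*} {P : List α → Prop} (l : List α) :
    (∀ i, P (l.take i)) ↔ ∀ t ∈ l.inits, P t := by
  simp only [List.mem_inits, List.prefix_iff_eq_take]
  exact ⟨fun h t ht => ht ▸ h _, fun h i => h _ (by simp)⟩

lemma nonnegPrefixes_concat (w : List ℤ) (x : ℤ) :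
    NonnegPrefixes (w ++ [x]) ↔ NonnegPrefixes w ∧ 0 ≤ w.sum + x := by
  simp only [NonnegPrefixes, forall_mem_inits_concat, List.sum_append, List.sum_singleton]

lemma NonnegPrefixes.sum_nonneg {w : List ℤ} (h : NonnegPrefixes w) : 0 ≤ w.sum :=
  h w ((List.mem_inits _ _).2 (List.prefix_refl w))

lemma nonnegPrefixes_inflate_iff (s : List DyckStep) :
    NonnegPrefixes (inflate s) ↔ ∀ t ∈ s.inits, t.count D ≤ t.count U := by
  induction s using List.reverseRecOn with
  | nil => simp [NonnegPrefixes]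
  | append_singleton s a ih =>
    rw [forall_mem_inits_concat, ← ih, List.count_append, List.count_append]
    have hsum := sum_inflate s
    have hnonneg := @NonnegPrefixes.sum_nonneg (inflate s)
    cases a
    · have h : inflate (s ++ [U]) = inflate s ++ [1] ++ [1] ++ [-1] := by simp [inflateStep]
      simp only [h, nonnegPrefixes_concat, List.sum_append, List.sum_singleton,
        List.count_singleton_self, List.count_singleton]
      grind
    · have h : inflate (s ++ [D]) = inflate s ++ [-1] := by simp [inflateStep]
      simp only [h, nonnegPrefixes_concat, List.count_singleton_self, List.count_singleton]
      grind

lemma mem_inflate {s : List DyckStep} {x : ℤ} (hx : x ∈ inflate s) : x = 1 ∨ x = -1 := by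
  obtain ⟨a, -, hx⟩ := List.mem_flatMap.1 hx
  cases a <;> simp [inflateStep] at hx <;> omega

lemma isDyckWord_inflate_iff (s : List DyckStep) :
    IsDyckWord (inflate s) ↔
      s.count U = s.count D ∧ ∀ i, (s.take i).count D ≤ (s.take i).count U := by
  rw [IsDyckWord, nonnegPrefixes_inflate_iff, ← forall_take_iff_forall_mem_inits, sum_inflate,
    sub_eq_zero, Nat.cast_inj]
  exact ⟨fun h => ⟨h.2.2, h.2.1⟩, fun h => ⟨fun _ => mem_inflate, h.2, h.1⟩⟩

lemma avoids_cons_iff (pat : List ℤ) (a : ℤ) (w : List ℤ) :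
    Avoids pat (a :: w) ↔ ¬ pat <+: a :: w ∧ Avoids pat w :=
  ⟨fun h => ⟨h 0, fun i => h (i + 1)⟩, fun ⟨h₀, h⟩ i => i.casesOn h₀ h⟩

lemma Avoids.not_prefix {pat w : List ℤ} (h : Avoids pat w) : ¬ pat <+: w := h 0

lemma Avoids.of_cons {pat w : List ℤ} {a : ℤ} (h : Avoids pat (a :: w)) : Avoids pat w :=
  fun i => h (i + 1)

lemma avoids_nil {pat : List ℤ} (h : pat ≠ []) : Avoids pat [] :=
  fun _ hocc => h (List.prefix_nil.1 (by simpa [OccursAt] using hocc))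

lemma not_UD_prefix_inflate (s : List DyckStep) : ¬ pUD <+: inflate s := by
  rcases s with _ | ⟨_ | _, s⟩ <;> simp [pUD, inflateStep]

lemma avoids_UUU_inflate (s : List DyckStep) : Avoids pUUU (inflate s) := by
  induction s with
  | nil => exact avoids_nil (by simp [pUUU])
  | cons a s ih => cases a <;> simpa [inflateStep, avoids_cons_iff, pUUU] using ih

lemma avoids_DUD_inflate (s : List DyckStep) : Avoids pDUD (inflate s) := by
  induction s with
  | nil => exact avoids_nil (by simp [pDUD])
  | cons a s ih =>
    have hUD := not_UD_prefix_inflate s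
    cases a <;> simp_all [inflateStep, avoids_cons_iff, pDUD, pUD]

-- The last two hypotheses replace the Dyck condition, which suffixes do not inherit.
lemma exists_inflate_eq (w : List ℤ) (hw : ∀ x ∈ w, x = 1 ∨ x = -1)
    (hUUU : Avoids pUUU w) (hDUD : Avoids pDUD w) (hUD : ¬ pUD <+: w) (hlast : ¬ [1] <:+ w) :
    ∃ s, inflate s = w :=
  match w with
  | [] => ⟨[], rfl⟩
  | [a] => by
    rcases hw a (by simp) with rfl | rfl
    · exact absurd List.suffix_rfl hlast
    · exact ⟨[D], rfl⟩
  | a :: b :: w => by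
    rcases hw a (by simp) with rfl | rfl
    · rcases hw b (by simp) with rfl | rfl
      · have ih := exists_inflate_eq w.tail
        rcases w with _ | ⟨c, t⟩
        · exact absurd (List.suffix_cons _ _) hlast
        rcases hw c (by simp) with rfl | rfl
        · exact absurd (by simp [pUUU]) hUUU.not_prefix
        obtain ⟨s, hs⟩ := ih (fun x hx => hw x (by simp [List.mem_of_mem_tail hx]))
          hUUU.of_cons.of_cons.of_cons hDUD.of_cons.of_cons.of_cons
          (fun h => hDUD.of_cons.of_cons.not_prefix (by simpa [pDUD, pUD] using h))
          (fun h => hlast (h.trans (List.suffix_append [1, 1, -1] t)))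
        exact ⟨U :: s, by simp [hs, inflateStep]⟩
      · exact absurd (by simp [pUD]) hUD
    · obtain ⟨s, hs⟩ := exists_inflate_eq (b :: w)
        (fun x hx => hw x (List.mem_cons_of_mem _ hx)) hUUU.of_cons hDUD.of_cons
        (fun h => hDUD.not_prefix (by simpa [pDUD, pUD] using h))
        (fun h => hlast (h.trans (List.suffix_cons _ _)))
      exact ⟨D :: s, by simp [hs, inflateStep]⟩
termination_by w.length

lemma IsDyckWord.not_suffix_one {w : List ℤ} (h : IsDyckWord w) : ¬ [1] <:+ w := by
  rintro ⟨v, rfl⟩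
  have hv := h.2.1 v ((List.mem_inits _ _).2 (List.prefix_append v [1]))
  have hsum := h.2.2
  simp only [List.sum_append, List.sum_singleton] at hsum
  omega

lemma length_inflate_dyckWord (p : DyckWord) :
    (inflate p.toList).length = 2 * (2 * p.semilength) := by
  rw [length_inflate, ← p.count_U_eq_count_D, DyckWord.semilength]
  ring

lemma exists_dyckWord_inflate_eq_iff (w : List ℤ) :
    (∃ p : DyckWord, inflate p.toList = w) ↔
      IsDyckWord w ∧ Avoids pUUU w ∧ Avoids pDUD w ∧ (w = [] ∨ pUUD <+: w) := by
  constructor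
  · rintro ⟨p, rfl⟩
    refine ⟨(isDyckWord_inflate_iff _).2 ⟨p.count_U_eq_count_D, p.count_D_le_count_U⟩,
      avoids_UUU_inflate _, avoids_DUD_inflate _, ?_⟩
    have hfirst := p.count_D_le_count_U 1
    revert hfirst
    rcases p.toList with _ | ⟨_ | _, s⟩ <;> simp [inflateStep, pUUD]
  · rintro ⟨hdyck, hUUU, hDUD, hstart⟩
    have hUD : ¬ pUD <+: w := by
      rcases hstart with rfl | ⟨t, rfl⟩
      · simp [pUD]
      · simp [pUD, pUUD, List.prefix_iff_eq_take]
    obtain ⟨s, rfl⟩ := exists_inflate_eq w hdyck.1 hUUU hDUD hUD hdyck.not_suffix_one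
    obtain ⟨hcount, hprefix⟩ := (isDyckWord_inflate_iff s).1 hdyck
    exact ⟨⟨s, hcount, hprefix⟩, rfl⟩

instance (m : ℕ) : Finite {p : DyckWord // 2 * p.semilength = m} :=
  Finite.of_injective (β := {q : DyckWord // q.semilength = m / 2})
    (fun p => ⟨p.1, by omega⟩) fun p q h => by simpa [Subtype.ext_iff] using h

lemma card_avoiding_UUU_DUD_eq_card_dyckWord (m : ℕ) :
    Nat.card {w : List ℤ // IsDyckWord w ∧ w.length = 2 * m ∧
      Avoids pUUU w ∧ Avoids pDUD w ∧ (w = [] ∨ pUUD <+: w)} =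
      Nat.card {p : DyckWord // 2 * p.semilength = m} := by
  refine (Nat.card_eq_of_bijective (fun p => ⟨inflate p.1.toList, by
    obtain ⟨hdyck, hrest⟩ := (exists_dyckWord_inflate_eq_iff _).1 ⟨p.1, rfl⟩
    exact ⟨hdyck, by rw [length_inflate_dyckWord, p.2], hrest⟩⟩) ⟨?_, ?_⟩).symm
  · intro p q h
    simpa [Subtype.ext_iff, DyckWord.ext_iff] using inflate_injective (congrArg Subtype.val h)
  · rintro ⟨w, hdyck, hlen, hrest⟩
    obtain ⟨p, rfl⟩ := (exists_dyckWord_inflate_eq_iff w).2 ⟨hdyck, hrest⟩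
    rw [length_inflate_dyckWord] at hlen
    exact ⟨⟨p, by omega⟩, rfl⟩

open Finset in
lemma card_prod_add_eq_sum_antidiagonal {α β : Type*} (f : α → ℕ) (g : β → ℕ)
    [∀ i, Finite {a // f a = i}] [∀ j, Finite {b // g b = j}] (n : ℕ) :
    Nat.card {x : α × β // f x.1 + g x.2 = n} =
      ∑ ij ∈ antidiagonal n, Nat.card {a // f a = ij.1} * Nat.card {b // g b = ij.2} := by
  let e : {x : α × β // f x.1 + g x.2 = n} ≃
      Σ ij : antidiagonal n, {a // f a = ij.1.1} × {b // g b = ij.1.2} :=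
    { toFun x :=
        ⟨⟨(f x.1.1, g x.1.2), mem_antidiagonal.2 x.2⟩, ⟨x.1.1, rfl⟩, ⟨x.1.2, rfl⟩⟩
      invFun y := ⟨(y.2.1, y.2.2), by rw [y.2.1.2, y.2.2.2]; exact mem_antidiagonal.1 y.1.2⟩
      left_inv _ := rfl
      right_inv := by
        rintro ⟨⟨⟨i, j⟩, hij⟩, ⟨a, ha⟩, ⟨b, hb⟩⟩
        dsimp only at ha hb
        subst ha hb
        rfl }
  rw [Nat.card_congr e, Nat.card_sigma]
  simp only [Nat.card_prod]
  exact sum_coe_sort _ fun ij : ℕ × ℕ =>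
    Nat.card {a // f a = ij.1} * Nat.card {b // g b = ij.2}

namespace DyckWord

lemma card_two_mul_semilength_eq_zero : Nat.card {p : DyckWord // 2 * p.semilength = 0} = 1 := by
  refine Nat.card_eq_one_iff_exists.2 ⟨⟨0, rfl⟩, fun p => Subtype.ext ?_⟩
  rw [← toList_eq_nil, ← List.length_eq_zero_iff, ← two_mul_semilength_eq_length, p.2]

lemma card_two_mul_semilength_eq_one : Nat.card {p : DyckWord // 2 * p.semilength = 1} = 0 :=
  have : IsEmpty {p : DyckWord // 2 * p.semilength = 1} := ⟨fun p => by omega⟩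
  Nat.card_of_isEmpty

open Finset in
lemma card_two_mul_semilength_eq_add_two (n : ℕ) :
    Nat.card {p : DyckWord // 2 * p.semilength = n + 2} = ∑ ij ∈ antidiagonal n,
      Nat.card {p : DyckWord // 2 * p.semilength = ij.1} *
        Nat.card {p : DyckWord // 2 * p.semilength = ij.2} := by
  have hne (p : {p : DyckWord // 2 * p.semilength = n + 2}) : p.1 ≠ 0 :=
    fun h => by simpa [h] using p.2
  rw [← card_prod_add_eq_sum_antidiagonal]
  exact Nat.card_congr
    { toFun p := ⟨(p.1.insidePart, p.1.outsidePart), by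
        have := semilength_insidePart_add_semilength_outsidePart_add_one (hne p)
        dsimp only
        omega⟩
      invFun x := ⟨x.1.1.nest + x.1.2, by simp; omega⟩
      left_inv p := Subtype.ext (nest_insidePart_add_outsidePart (hne p))
      right_inv x := Subtype.ext (Prod.ext (by simp) (by simp)) }

end DyckWord

namespace PowerSeries

open Finset in
lemma eq_one_add_X_sq_mul_sq {R : Type*} [CommSemiring R] {A : R⟦X⟧}
    (h₀ : coeff 0 A = 1) (h₁ : coeff 1 A = 0)
    (h : ∀ n, coeff (n + 2) A = ∑ ij ∈ antidiagonal n, coeff ij.1 A * coeff ij.2 A) :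
    A = 1 + X ^ 2 * A ^ 2 := by
  ext (_ | _ | n)
  · simp [h₀]
  · simp [h₁, coeff_X_pow_mul']
  · rw [map_add, coeff_X_pow_mul', if_pos (by omega), sq, coeff_mul, coeff_one, if_neg (by omega),
      zero_add]
    exact h n

lemma eq_one_add_X_sq_mul_mul_inv {k : Type*} [Field k] {A : k⟦X⟧} (h : A = 1 + X ^ 2 * A ^ 2) :
    A = 1 + X ^ 2 * A * (1 - X ^ 2 * A)⁻¹ := by
  have hinv : A = (1 - X ^ 2 * A)⁻¹ :=
    (eq_inv_iff_mul_eq_one (by simp)).2 (by linear_combination h)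
  rw [← hinv]
  linear_combination h

end PowerSeries

open PowerSeries in
/-- The generating function A*(x) of Dyck paths avoiding UUU and DUD and starting
with UUD (or empty), counted by semilength, satisfies
A*(x) = 1 + x² A*(x) / (1 - x² A*(x)). -/
theorem stmt_1 (A : PowerSeries ℚ)
    (hA : ∀ m : ℕ, (PowerSeries.coeff m) A =
      Nat.card {w : List ℤ // IsDyckWord w ∧ w.length = 2 * m ∧
        Avoids pUUU w ∧ Avoids pDUD w ∧ (w = [] ∨ pUUD <+: w)}) :
    A = 1 + X ^ 2 * A * (1 - X ^ 2 * A)⁻¹ := by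
  have hcoeff (m : ℕ) : coeff m A = Nat.card {p : DyckWord // 2 * p.semilength = m} := by
    rw [hA, card_avoiding_UUU_DUD_eq_card_dyckWord]
  refine eq_one_add_X_sq_mul_mul_inv (eq_one_add_X_sq_mul_sq ?_ ?_ fun n => ?_)
  · rw [hcoeff, DyckWord.card_two_mul_semilength_eq_zero, Nat.cast_one]
  · rw [hcoeff, DyckWord.card_two_mul_semilength_eq_one, Nat.cast_zero]
  · simp only [hcoeff, DyckWord.card_two_mul_semilength_eq_add_two, Nat.cast_sum, Nat.cast_mul]
end

section
/- The generating function K(x) counting by semilength the Dyck paths avoiding UUU and DUD at height h>0 and having no occurrence of the factor UD at height 0 satisfies K(x) = 1 + x(A*(x) − 1 + x·A*(x))·K(x), where A*(x) is the generating function of Dyck paths avoiding UUU and DUD that start with UUD (or are empty). -/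
/-!
First-return decomposition: a nonempty K-path is `U α D β` with `α, β` Dyck. Occurrences of a
pattern inside `α` lie at height `≥ 1`, and none of UUU, DUD, UD can straddle the junction `α D`,
which reads `DD`. Hence the K-conditions on `U α D β` say exactly that `α` is a nonempty Dyck path
avoiding UUU and DUD and that `β` is a K-path (a DUD on the return step would make `β` start with
UD at height 0). Such an `α` either starts with UUD, i.e. is a nonempty A*-path, or is `U D α'`
with `α'` an A*-path. In generating functions: `K = 1 + x B K` and `B = (A* - 1) + x A*`.
-/

open PowerSeries Finset

section SizeGF

variable {α β : Type*}

/-- Only meaningful when the fibres of `size` are finite: `Nat.card` of an infinite type is `0`. -/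
noncomputable def sizeGF (size : α → ℕ) : PowerSeries ℚ :=
  PowerSeries.mk fun n => Nat.card {a // size a = n}

class FiniteFibers (size : α → ℕ) : Prop where
  finite_fiber (n : ℕ) : Finite {a // size a = n}

attribute [instance] FiniteFibers.finite_fiber

def sizeProd (s : α → ℕ) (t : β → ℕ) (p : α × β) : ℕ := s p.1 + t p.2

def fiberSizeProdEquiv (s : α → ℕ) (t : β → ℕ) (n : ℕ) :
    {p // sizeProd s t p = n} ≃
      Σ ij : antidiagonal n, {a // s a = ij.1.1} × {b // t b = ij.1.2} where
  toFun p := ⟨⟨(s p.1.1, t p.1.2), mem_antidiagonal.2 p.2⟩, ⟨p.1.1, rfl⟩, ⟨p.1.2, rfl⟩⟩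
  invFun x := ⟨(x.2.1, x.2.2), by
    rw [sizeProd, x.2.1.2, x.2.2.2]; exact mem_antidiagonal.1 x.1.2⟩
  left_inv _ := rfl
  right_inv := by
    rintro ⟨⟨⟨i, j⟩, hij⟩, ⟨a, ha⟩, ⟨b, hb⟩⟩
    simp only at ha hb
    subst ha hb
    rfl

instance FiniteFibers.of_finite [Finite α] (s : α → ℕ) : FiniteFibers s :=
  ⟨fun _ => inferInstance⟩

instance FiniteFibers.sum (s : α → ℕ) (t : β → ℕ) [FiniteFibers s] [FiniteFibers t] :
    FiniteFibers (Sum.elim s t) :=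
  ⟨fun n => Finite.of_equiv ({a // s a = n} ⊕ {b // t b = n})
    (Equiv.subtypeSum (p := fun x => Sum.elim s t x = n)).symm⟩

instance FiniteFibers.sizeProd (s : α → ℕ) (t : β → ℕ) [FiniteFibers s] [FiniteFibers t] :
    FiniteFibers (sizeProd s t) :=
  ⟨fun n => Finite.of_equiv _ (fiberSizeProdEquiv s t n).symm⟩

theorem coeff_sizeGF (s : α → ℕ) (n : ℕ) : coeff n (sizeGF s) = Nat.card {a // s a = n} := by
  simp [sizeGF]

theorem sizeGF_eq_of_bijective {s : α → ℕ} {t : β → ℕ} (f : α → β) (hf : f.Bijective)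
    (hfs : ∀ a, t (f a) = s a) : sizeGF t = sizeGF s := by
  ext n
  rw [coeff_sizeGF, coeff_sizeGF, ← Nat.card_congr ((Equiv.ofBijective f hf).subtypeEquiv
    (p := fun a => s a = n) (q := fun b => t b = n) fun a => by simp [hfs])]

theorem sizeGF_const (c : ℕ) : sizeGF (fun _ : Unit => c) = X ^ c := by
  ext n
  rw [coeff_sizeGF, coeff_X_pow]
  split_ifs with h
  · subst h; simp
  · simp [Ne.symm h]

theorem sizeGF_sum (s : α → ℕ) (t : β → ℕ) [FiniteFibers s] [FiniteFibers t] :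
    sizeGF (Sum.elim s t) = sizeGF s + sizeGF t := by
  ext n
  simp only [coeff_sizeGF, map_add, Nat.card_congr Equiv.subtypeSum, Nat.card_sum,
    Sum.elim_inl, Sum.elim_inr, Nat.cast_add]

theorem sizeGF_sizeProd (s : α → ℕ) (t : β → ℕ) [FiniteFibers s] [FiniteFibers t] :
    sizeGF (sizeProd s t) = sizeGF s * sizeGF t := by
  ext n
  rw [coeff_mul, coeff_sizeGF, Nat.card_congr (fiberSizeProdEquiv s t n), Nat.card_sigma,
    Nat.cast_sum, ← Finset.sum_coe_sort (antidiagonal n)]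
  simp only [coeff_sizeGF, Nat.card_prod, Nat.cast_mul]

end SizeGF

section DyckWords

variable {w α β : List ℤ}

theorem NonnegPrefixes.sum_take_nonneg (hw : NonnegPrefixes w) (i : ℕ) : 0 ≤ (w.take i).sum :=
  hw _ ((List.mem_inits _ _).2 (List.take_prefix i w))

theorem not_nonnegPrefixes_append_neg_one (hα : α.sum = 0) (l : List ℤ) :
    ¬ NonnegPrefixes (α ++ -1 :: l) := fun h => by
  have := h (α ++ [-1]) ((List.mem_inits _ _).2 (by simp))
  simp [hα] at this

theorem isDyckWord_nil : IsDyckWord [] := by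
  simp [IsDyckWord, NonnegPrefixes]

theorem IsDyckWord.even_length (hw : IsDyckWord w) : Even w.length := by
  suffices h : ∀ l : List ℤ, (∀ s ∈ l, s = 1 ∨ s = -1) → Even ((l.length : ℤ) + l.sum) by
    simpa [hw.2.2] using h w hw.1
  intro l hl
  induction l with
  | nil => simp
  | cons a l ih =>
    have h := ih fun s hs => hl s (.tail a hs)
    rcases hl a (.head l) with rfl | rfl <;>
      simpa [parity_simps, add_assoc, add_left_comm] using h

theorem IsDyckWord.eq_cons (hw : IsDyckWord w) (hne : w ≠ []) : ∃ t, w = 1 :: t := by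
  obtain ⟨a, t, rfl⟩ := List.exists_cons_of_ne_nil hne
  rcases hw.1 a (.head t) with rfl | rfl
  · exact ⟨t, rfl⟩
  · simpa using hw.2.1.sum_take_nonneg 1

theorem IsDyckWord.eq_append (hw : IsDyckWord w) (hne : w ≠ []) : ∃ v, w = v ++ [-1] := by
  obtain ⟨v, a, rfl⟩ := (List.eq_nil_or_concat' w).resolve_left hne
  rcases hw.1 a (by simp) with rfl | rfl
  · have := hw.2.1 v ((List.mem_inits _ _).2 (List.prefix_append _ _))
    have := hw.2.2
    simp at this
    omega
  · exact ⟨v, rfl⟩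

theorem IsDyckWord.cons_append (hα : IsDyckWord α) (hβ : IsDyckWord β) :
    IsDyckWord (1 :: α ++ -1 :: β) := by
  refine ⟨?_, ?_, by simp [hα.2.2, hβ.2.2]⟩
  · intro s hs
    simp only [List.cons_append, List.mem_cons, List.mem_append] at hs
    rcases hs with rfl | hs | rfl | hs
    exacts [.inl rfl, hα.1 s hs, .inr rfl, hβ.1 s hs]
  · intro p hp
    simp only [List.cons_append, List.inits_cons, List.inits_append, List.mem_cons,
      List.mem_map, List.mem_append, List.tail_cons] at hp
    rcases hp with rfl | ⟨q, hq | ⟨r, ⟨r', hr', rfl⟩, rfl⟩, rfl⟩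
    · simp
    · have := hα.2.1 q hq
      simp only [List.sum_cons]
      omega
    · have := hβ.2.1 r' hr'
      simp [hα.2.2]
      omega

theorem exists_eq_append_neg_one {l : List ℤ} (hl : ∀ s ∈ l, s = 1 ∨ s = -1)
    (hneg : ∃ p ∈ l.inits, p.sum < 0) : ∃ α β, l = α ++ -1 :: β ∧ IsDyckWord α := by
  induction l using List.reverseRecOn with
  | nil => simp at hneg
  | append_singleton l a ih =>
    have hl' : ∀ s ∈ l, s = 1 ∨ s = -1 := fun s hs => hl s (by simp [hs])
    by_cases h : ∃ p ∈ l.inits, p.sum < 0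
    · obtain ⟨α, β, rfl, hα⟩ := ih hl' h
      exact ⟨α, β ++ [a], by simp, hα⟩
    · push Not at h
      obtain ⟨p, hp, hpneg⟩ := hneg
      simp only [List.inits_append, List.mem_append, List.mem_map] at hp
      rcases hp with hp | ⟨q, hq, rfl⟩
      · exact absurd (h p hp) (not_le.2 hpneg)
      · simp only [List.inits, List.tail_cons, List.map_cons, List.map_nil,
          List.mem_singleton] at hq
        subst hq
        have hl0 := h l ((List.mem_inits _ _).2 (List.prefix_refl l))
        rcases hl a (by simp) with rfl | rfl
        · simp at hpneg; omega
        · refine ⟨l, [], rfl, hl', h, ?_⟩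
          simp at hpneg
          omega

theorem IsDyckWord.exists_eq_cons_append (hw : IsDyckWord w) (hne : w ≠ []) :
    ∃ α β, w = 1 :: α ++ -1 :: β ∧ IsDyckWord α ∧ IsDyckWord β := by
  obtain ⟨t, rfl⟩ := hw.eq_cons hne
  have hsum : t.sum = -1 := by have := hw.2.2; simp at this; omega
  obtain ⟨α, β, rfl, hα⟩ := exists_eq_append_neg_one (fun s hs => hw.1 s (.tail 1 hs))
    ⟨t, (List.mem_inits _ _).2 (List.prefix_refl t), by omega⟩
  refine ⟨α, β, rfl, hα, fun s hs => hw.1 s (by simp [hs]), ?_, by simpa [hα.2.2] using hsum⟩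
  intro p hp
  have := hw.2.1 (1 :: α ++ -1 :: p) ((List.mem_inits _ _).2 <|
    by simpa using (List.mem_inits _ _).1 hp)
  simpa [hα.2.2] using this

theorem IsDyckWord.cons_append_inj {α' β' : List ℤ} (hα : IsDyckWord α) (hα' : IsDyckWord α')
    (h : 1 :: α ++ -1 :: β = 1 :: α' ++ -1 :: β') : α = α' ∧ β = β' := by
  simp only [List.cons_append, List.cons.injEq, true_and] at h
  rcases List.append_eq_append_iff.1 h with ⟨a', rfl, hb⟩ | ⟨c', rfl, hc⟩
  · rcases a' with _ | ⟨x, r⟩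
    · simpa [eq_comm] using hb
    · obtain ⟨rfl, -⟩ := List.cons.inj hb
      exact absurd hα'.2.1 (not_nonnegPrefixes_append_neg_one hα.2.2 r)
  · rcases c' with _ | ⟨x, r⟩
    · simpa [eq_comm] using hc
    · obtain ⟨rfl, -⟩ := List.cons.inj hc
      exact absurd hα.2.1 (not_nonnegPrefixes_append_neg_one hα'.2.2 r)

theorem isDyckWord_cons_cons_iff : IsDyckWord (1 :: -1 :: w) ↔ IsDyckWord w := by
  refine ⟨fun hw => ?_, isDyckWord_nil.cons_append⟩
  obtain ⟨α, β, h, hα, hβ⟩ := hw.exists_eq_cons_append (List.cons_ne_nil _ _)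
  obtain ⟨-, rfl⟩ := isDyckWord_nil.cons_append_inj (β := w) hα h
  exact hβ

end DyckWords

section Occurrences

variable {p w x y α β : List ℤ} {a h : ℤ} {i : ℕ}

def OccursAtHeight (p w : List ℤ) (h : ℤ) : Prop := ∃ i, OccursAt p w i ∧ (w.take i).sum = h

theorem avoidsAtPosHeight_iff : AvoidsAtPosHeight p w ↔ ∀ h, OccursAtHeight p w h → h ≤ 0 := by
  simp only [AvoidsAtPosHeight, OccursAtHeight]
  grind

theorem avoids_iff : Avoids p w ↔ ∀ h, ¬ OccursAtHeight p w h := by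
  simp [Avoids, OccursAtHeight]

theorem not_occursAtHeight_iff :
    ¬ OccursAtHeight p w h ↔ ∀ i, OccursAt p w i → (w.take i).sum ≠ h := by
  simp [OccursAtHeight]

theorem OccursAtHeight.of_prefix (hp : p <+: w) : OccursAtHeight p w 0 :=
  ⟨0, by simpa [OccursAt] using hp, by simp⟩

theorem NonnegPrefixes.nonneg_of_occursAtHeight (hw : NonnegPrefixes w)
    (hocc : OccursAtHeight p w h) : 0 ≤ h := by
  obtain ⟨i, -, rfl⟩ := hocc
  exact hw.sum_take_nonneg i

theorem OccursAt.add_length_le (hocc : OccursAt p w i) (hp : p ≠ []) :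
    i + p.length ≤ w.length := by
  have := hocc.length_le
  have := List.length_pos_iff.2 hp
  simp only [List.length_drop] at *
  omega

theorem occursAtHeight_cons :
    OccursAtHeight p (a :: w) h ↔ (h = 0 ∧ p <+: a :: w) ∨ OccursAtHeight p w (h - a) := by
  constructor
  · rintro ⟨_ | i, hocc, rfl⟩
    · exact .inl ⟨by simp, hocc⟩
    · exact .inr ⟨i, hocc, by simp⟩
  · rintro (⟨rfl, hp⟩ | ⟨i, hocc, hi⟩)
    · exact .of_prefix hp
    · exact ⟨i + 1, hocc, by simp [hi]⟩

theorem occursAtHeight_append (hp : p ≠ [])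
    (hxy : ∀ i < x.length, x.length < i + p.length → ¬ OccursAt p (x ++ y) i) :
    OccursAtHeight p (x ++ y) h ↔ OccursAtHeight p x h ∨ OccursAtHeight p y (h - x.sum) := by
  constructor
  · rintro ⟨i, hocc, rfl⟩
    by_cases hi : x.length ≤ i
    · obtain ⟨k, rfl⟩ := Nat.exists_eq_add_of_le hi
      refine .inr ⟨k, ?_, by simp [List.take_length_add_append]⟩
      rwa [OccursAt, List.drop_length_add_append] at hocc
    · have hix : i + p.length ≤ x.length := by
        by_contra! hlt
        exact hxy i (by omega) hlt hocc
      refine .inl ⟨i, ?_, by rw [List.take_append_of_le_length (by omega)]⟩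
      refine List.prefix_of_prefix_length_le hocc ?_ (by simp; omega)
      rw [List.drop_append_of_le_length (by omega)]
      exact List.prefix_append (x.drop i) y
  · rintro (⟨i, hocc, rfl⟩ | ⟨k, hocc, hk⟩)
    · have hix := hocc.add_length_le hp
      refine ⟨i, ?_, by rw [List.take_append_of_le_length (by omega)]⟩
      unfold OccursAt at hocc ⊢
      rw [List.drop_append_of_le_length (by omega)]
      exact hocc.trans (List.prefix_append _ _)
    · refine ⟨x.length + k, by rwa [OccursAt, List.drop_length_add_append], ?_⟩
      simp [List.take_length_add_append, hk]

/-- The junction of a nonempty Dyck word with a following down step reads `DD`, which `p` lacks. -/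
theorem IsDyckWord.not_occursAt_append_neg_one (hα : IsDyckWord α) (hDD : ¬ [-1, -1] <:+: p)
    (hi : i < α.length) (hip : α.length < i + p.length) :
    ¬ OccursAt p (α ++ -1 :: β) i := by
  intro hocc
  obtain ⟨v, rfl⟩ := hα.eq_append (List.ne_nil_of_length_pos (by omega))
  simp only [List.length_append, List.length_singleton] at hi hip
  have hpre : (v.drop i ++ [-1, -1]) <+: p := by
    refine List.prefix_of_prefix_length_le ?_ hocc (by simp; omega)
    rw [List.drop_append_of_le_length (by simp; omega), List.drop_append_of_le_length (by omega)]
    simp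
  obtain ⟨r, rfl⟩ := hpre
  exact hDD (List.infix_append _ _ _)

theorem IsDyckWord.occursAtHeight_cons_append_iff (hα : IsDyckWord α) (hp : p ≠ [])
    (hDD : ¬ [-1, -1] <:+: p) :
    OccursAtHeight p (1 :: α ++ -1 :: β) h ↔ (h = 0 ∧ p <+: 1 :: α ++ -1 :: β) ∨
      OccursAtHeight p α (h - 1) ∨ (h = 1 ∧ p <+: -1 :: β) ∨ OccursAtHeight p β h := by
  rw [List.cons_append, occursAtHeight_cons,
    occursAtHeight_append hp fun _ => hα.not_occursAt_append_neg_one hDD, occursAtHeight_cons]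
  simp only [hα.2.2, sub_zero, sub_neg_eq_add, sub_add_cancel, sub_eq_zero]

end Occurrences

section Constraints

variable {p w α β : List ℤ}

/-! Conditions cutting the paper's classes out of the Dyck words: `K` and `A*` as in the
statement, `APos` the nonempty `A*`-paths, and `B` the first-return factors `α` of `U α D β`. -/

def KConstraint (w : List ℤ) : Prop :=
  AvoidsAtPosHeight pUUU w ∧ AvoidsAtPosHeight pDUD w ∧
    ∀ i, OccursAt pUD w i → (w.take i).sum ≠ 0

def AConstraint (w : List ℤ) : Prop :=
  Avoids pUUU w ∧ Avoids pDUD w ∧ (w = [] ∨ pUUD <+: w)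

def APosConstraint (w : List ℤ) : Prop := Avoids pUUU w ∧ Avoids pDUD w ∧ pUUD <+: w

def BConstraint (w : List ℤ) : Prop := Avoids pUUU w ∧ Avoids pDUD w ∧ w ≠ []

theorem avoids_cons {a : ℤ} : Avoids p (a :: w) ↔ ¬ p <+: a :: w ∧ Avoids p w := by
  constructor
  · exact fun h => ⟨fun hp => h 0 (by simpa [OccursAt] using hp), fun i => h (i + 1)⟩
  · rintro ⟨h0, h⟩ (_ | i)
    exacts [by simpa [OccursAt] using h0, h i]

theorem IsDyckWord.avoidsAtPosHeight_cons_append_iff (hα : IsDyckWord α) (hp : p ≠ [])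
    (hDD : ¬ [-1, -1] <:+: p) :
    AvoidsAtPosHeight p (1 :: α ++ -1 :: β) ↔
      Avoids p α ∧ ¬ p <+: -1 :: β ∧ AvoidsAtPosHeight p β := by
  simp only [avoidsAtPosHeight_iff, avoids_iff, hα.occursAtHeight_cons_append_iff hp hDD]
  constructor
  · intro H
    refine ⟨fun h hocc => ?_, fun hpre => absurd (H 1 (.inr (.inr (.inl ⟨rfl, hpre⟩)))) (by simp),
      fun h hocc => H h (.inr (.inr (.inr hocc)))⟩
    have := H (h + 1) (.inr (.inl (by simpa using hocc)))
    have := hα.2.1.nonneg_of_occursAtHeight hocc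
    omega
  · rintro ⟨hα', hβ₀, hβ⟩ h (⟨rfl, -⟩ | hocc | ⟨rfl, hpre⟩ | hocc)
    exacts [le_rfl, absurd hocc (hα' _), absurd hpre hβ₀, hβ h hocc]

theorem IsDyckWord.occursAtHeight_pUD_zero_cons_append_iff (hα : IsDyckWord α) :
    OccursAtHeight pUD (1 :: α ++ -1 :: β) 0 ↔ α = [] ∨ OccursAtHeight pUD β 0 := by
  rw [hα.occursAtHeight_cons_append_iff (by simp [pUD]) (by decide)]
  have hα₀ : ¬ OccursAtHeight pUD α (-1) := fun hocc =>
    absurd (hα.2.1.nonneg_of_occursAtHeight hocc) (by simp)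
  have hpre : pUD <+: 1 :: (α ++ -1 :: β) ↔ α = [] := by
    rcases eq_or_ne α [] with rfl | hne
    · simp [pUD]
    · obtain ⟨t, rfl⟩ := hα.eq_cons hne
      simp [pUD]
  simp [hα₀, hpre]

theorem IsDyckWord.kConstraint_cons_append_iff (hα : IsDyckWord α) :
    KConstraint (1 :: α ++ -1 :: β) ↔ BConstraint α ∧ KConstraint β := by
  have hUD : pDUD <+: -1 :: β ↔ pUD <+: β := by simp [pDUD, pUD]
  simp only [KConstraint, BConstraint, ← not_occursAtHeight_iff,
    hα.avoidsAtPosHeight_cons_append_iff (p := pUUU) (by simp [pUUU]) (by decide),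
    hα.avoidsAtPosHeight_cons_append_iff (p := pDUD) (by simp [pDUD]) (by decide),
    hα.occursAtHeight_pUD_zero_cons_append_iff, hUD]
  have hU : ¬ pUUU <+: -1 :: β := by simp [pUUU]
  have h₀ : pUD <+: β → OccursAtHeight pUD β 0 := .of_prefix
  tauto

theorem IsDyckWord.pUUD_prefix_of_avoids {r : List ℤ} (hw : IsDyckWord (1 :: 1 :: r))
    (hU : Avoids pUUU (1 :: 1 :: r)) : pUUD <+: 1 :: 1 :: r := by
  rcases r with _ | ⟨x, r⟩
  · simp [IsDyckWord] at hw
  · rcases hw.1 x (by simp) with rfl | rfl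
    · exact absurd ⟨r, rfl⟩ (hU 0)
    · exact ⟨r, rfl⟩

theorem IsDyckWord.bConstraint_iff (hα : IsDyckWord α) :
    BConstraint α ↔ APosConstraint α ∨ ∃ t, α = 1 :: -1 :: t ∧ AConstraint t := by
  constructor
  · rintro ⟨hU, hD, hne⟩
    obtain ⟨_ | ⟨x, t⟩, rfl⟩ := hα.eq_cons hne
    · simp [IsDyckWord] at hα
    rcases hα.1 x (by simp) with rfl | rfl
    · exact .inl ⟨hU, hD, hα.pUUD_prefix_of_avoids hU⟩
    have hUt := (avoids_cons.1 (avoids_cons.1 hU).2).2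
    refine .inr ⟨t, rfl, hUt, (avoids_cons.1 (avoids_cons.1 hD).2).2, ?_⟩
    have ht := isDyckWord_cons_cons_iff.1 hα
    rcases eq_or_ne t [] with rfl | hne
    · exact .inl rfl
    obtain ⟨_ | ⟨y, s⟩, rfl⟩ := ht.eq_cons hne
    · simp [IsDyckWord] at ht
    rcases ht.1 y (by simp) with rfl | rfl
    · exact .inr (ht.pUUD_prefix_of_avoids hUt)
    · exact absurd ⟨s, rfl⟩ (hD 1)
  · rintro (⟨hU, hD, hpre⟩ | ⟨t, rfl, hU, hD, ht⟩)
    · exact ⟨hU, hD, by rintro rfl; simp [pUUD] at hpre⟩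
    refine ⟨avoids_cons.2 ⟨by simp [pUUU], avoids_cons.2 ⟨by simp [pUUU], hU⟩⟩,
      avoids_cons.2 ⟨by simp [pDUD], avoids_cons.2 ⟨?_, hD⟩⟩, by simp⟩
    rcases ht with rfl | ⟨r, rfl⟩ <;> simp [pDUD, pUUD]

end Constraints

section DyckClasses

abbrev DyckClass (R : List ℤ → Prop) := {w : List ℤ // IsDyckWord w ∧ R w}

def DyckClass.semilength {R : List ℤ → Prop} (x : DyckClass R) : ℕ := x.1.length / 2

def DyckClass.fiberEquiv (R : List ℤ → Prop) (n : ℕ) :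
    {x : DyckClass R // x.semilength = n} ≃
      {w : List ℤ // IsDyckWord w ∧ w.length = 2 * n ∧ R w} :=
  (Equiv.subtypeSubtypeEquivSubtypeInter (fun w => IsDyckWord w ∧ R w)
    (fun w => w.length / 2 = n)).trans <| Equiv.subtypeEquivRight fun w => by
    constructor
    · rintro ⟨⟨hw, hR⟩, hn⟩
      obtain ⟨k, hk⟩ := hw.even_length
      exact ⟨hw, by omega, hR⟩
    · rintro ⟨hw, hn, hR⟩
      exact ⟨⟨hw, hR⟩, by omega⟩

theorem finite_isDyckWord_length (R : List ℤ → Prop) (m : ℕ) :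
    Finite {w : List ℤ // IsDyckWord w ∧ w.length = m ∧ R w} := by
  have := (List.finite_length_eq Bool m).to_subtype
  refine Finite.of_injective (β := {l : List Bool | l.length = m})
    (fun w => ⟨w.1.map (· == 1), by simp [w.2.2.1]⟩) ?_
  have hdecode (v : List ℤ) (hv : IsDyckWord v) :
      (v.map (· == 1)).map (fun b => if b then (1 : ℤ) else -1) = v := by
    rw [List.map_map]
    conv_rhs => rw [← List.map_id v]
    refine List.map_congr_left fun s hs => ?_
    rcases hv.1 s hs with rfl | rfl <;> rfl
  intro v v' h
  have := congrArg (fun l : {l : List Bool | l.length = m} =>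
    l.1.map (fun b => if b then (1 : ℤ) else -1)) h
  simp only [hdecode v.1 v.2.1, hdecode v'.1 v'.2.1] at this
  exact Subtype.ext this

instance (R : List ℤ → Prop) : FiniteFibers (DyckClass.semilength (R := R)) :=
  ⟨fun n => have := finite_isDyckWord_length R (2 * n)
    Finite.of_equiv _ (DyckClass.fiberEquiv R n).symm⟩

noncomputable def dyckGF (R : List ℤ → Prop) : PowerSeries ℚ :=
  sizeGF (DyckClass.semilength (R := R))

theorem coeff_dyckGF (R : List ℤ → Prop) (n : ℕ) :
    coeff n (dyckGF R) = Nat.card {w : List ℤ // IsDyckWord w ∧ w.length = 2 * n ∧ R w} := by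
  rw [dyckGF, coeff_sizeGF, Nat.card_congr (DyckClass.fiberEquiv R n)]

end DyckClasses

section Decompositions

open DyckClass

/-! `Unit` sized `0` is the empty path and `Unit` sized `1` the atom `x` of the symbolic method. -/

def aJoin : Unit ⊕ DyckClass APosConstraint → DyckClass AConstraint
  | .inl _ => ⟨[], isDyckWord_nil, by simp [AConstraint, Avoids, OccursAt, pUUU, pDUD]⟩
  | .inr x => ⟨x.1, x.2.1, x.2.2.1, x.2.2.2.1, .inr x.2.2.2.2⟩

theorem aJoin_bijective : aJoin.Bijective := by
  constructor
  · rintro (⟨⟩ | ⟨x, _, _, _, hx⟩) (⟨⟩ | ⟨y, _, _, _, hy⟩) h <;>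
      simp only [aJoin, Subtype.mk.injEq, reduceCtorEq] at h ⊢
    · subst h; simp [pUUD] at hy
    · subst h; simp [pUUD] at hx
    · subst h; rfl
  · rintro ⟨w, hw, hU, hD, rfl | hpre⟩
    exacts [⟨.inl (), rfl⟩, ⟨.inr ⟨w, hw, hU, hD, hpre⟩, rfl⟩]

theorem dyckGF_aConstraint : dyckGF AConstraint = 1 + dyckGF APosConstraint := by
  refine (sizeGF_eq_of_bijective aJoin aJoin_bijective (s := Sum.elim (fun _ => 0) semilength)
    (by rintro (_ | x) <;> simp [aJoin, semilength])).trans ?_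
  rw [sizeGF_sum, sizeGF_const, pow_zero, dyckGF]

def bJoin : DyckClass APosConstraint ⊕ Unit × DyckClass AConstraint → DyckClass BConstraint
  | .inl x => ⟨x.1, x.2.1, x.2.1.bConstraint_iff.2 (.inl x.2.2)⟩
  | .inr (_, t) => ⟨1 :: -1 :: t.1, isDyckWord_cons_cons_iff.2 t.2.1,
      (isDyckWord_cons_cons_iff.2 t.2.1).bConstraint_iff.2 (.inr ⟨t.1, rfl, t.2.2⟩)⟩

theorem bJoin_bijective : bJoin.Bijective := by
  constructor
  · rintro (⟨x, _, _, _, hx⟩ | ⟨⟨⟩, t⟩) (⟨y, _, _, _, hy⟩ | ⟨⟨⟩, t'⟩) h <;>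
      simp only [bJoin, Subtype.mk.injEq, List.cons.injEq, true_and] at h ⊢
    · subst h; rfl
    · subst h; simp [pUUD] at hx
    · subst h; simp [pUUD] at hy
    · rw [Subtype.ext h]
  · rintro ⟨w, hw, hB⟩
    rcases hw.bConstraint_iff.1 hB with hA | ⟨t, rfl, ht⟩
    exacts [⟨.inl ⟨w, hw, hA⟩, rfl⟩, ⟨.inr ((), ⟨t, isDyckWord_cons_cons_iff.1 hw, ht⟩), rfl⟩]

theorem dyckGF_bConstraint :
    dyckGF BConstraint = dyckGF APosConstraint + X * dyckGF AConstraint := by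
  refine (sizeGF_eq_of_bijective bJoin bJoin_bijective
    (s := Sum.elim semilength (sizeProd (fun _ => 1) semilength)) ?_).trans ?_
  · rintro (x | ⟨-, t⟩)
    · rfl
    · simp only [bJoin, semilength, Sum.elim_inr, sizeProd, List.length_cons]
      omega
  · rw [sizeGF_sum, sizeGF_sizeProd, sizeGF_const, pow_one, dyckGF, dyckGF]

def kJoin : Unit ⊕ Unit × (DyckClass BConstraint × DyckClass KConstraint) →
    DyckClass KConstraint
  | .inl _ => ⟨[], isDyckWord_nil, by simp [KConstraint, AvoidsAtPosHeight, OccursAt, pUD]⟩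
  | .inr (_, α, β) => ⟨1 :: α.1 ++ -1 :: β.1, α.2.1.cons_append β.2.1,
      α.2.1.kConstraint_cons_append_iff.2 ⟨α.2.2, β.2.2⟩⟩

theorem kJoin_bijective : kJoin.Bijective := by
  constructor
  · rintro (⟨⟩ | ⟨⟨⟩, α, β⟩) (⟨⟩ | ⟨⟨⟩, α', β'⟩) h <;>
      simp only [kJoin, Subtype.mk.injEq, reduceCtorEq] at h ⊢
    · simp at h
    · simp at h
    · obtain ⟨hα, hβ⟩ := α.2.1.cons_append_inj α'.2.1 h
      rw [Subtype.ext hα, Subtype.ext hβ]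
  · rintro ⟨w, hw, hK⟩
    rcases eq_or_ne w [] with rfl | hne
    · exact ⟨.inl (), rfl⟩
    obtain ⟨α, β, rfl, hα, hβ⟩ := hw.exists_eq_cons_append hne
    obtain ⟨hαB, hβK⟩ := hα.kConstraint_cons_append_iff.1 hK
    exact ⟨.inr ((), ⟨α, hα, hαB⟩, ⟨β, hβ, hβK⟩), rfl⟩

theorem dyckGF_kConstraint :
    dyckGF KConstraint = 1 + X * (dyckGF BConstraint * dyckGF KConstraint) := by
  refine (sizeGF_eq_of_bijective kJoin kJoin_bijective (s := Sum.elim (fun _ => 0)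
    (sizeProd (fun _ => 1) (sizeProd semilength semilength))) ?_).trans ?_
  · rintro (_ | ⟨-, α, β⟩)
    · simp [kJoin, semilength]
    · obtain ⟨k, hk⟩ := α.2.1.even_length
      simp only [kJoin, semilength, Sum.elim_inr, sizeProd, List.length_append, List.length_cons]
      omega
  · rw [sizeGF_sum, sizeGF_sizeProd, sizeGF_sizeProd, sizeGF_const, sizeGF_const, pow_zero,
      pow_one, dyckGF, dyckGF]

end Decompositions

open PowerSeries in
/-- The generating function K(x) of Dyck paths avoiding UUU and DUD at height h > 0
with no occurrence of the factor UD at height 0 satisfies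
K(x) = 1 + x(A*(x) - 1 + x A*(x)) K(x). -/
theorem stmt_9 (K A : PowerSeries ℚ)
    (hK : ∀ n : ℕ, (PowerSeries.coeff n) K =
      Nat.card {w : List ℤ // IsDyckWord w ∧ w.length = 2 * n ∧
        AvoidsAtPosHeight pUUU w ∧ AvoidsAtPosHeight pDUD w ∧
        ∀ i, OccursAt pUD w i → (w.take i).sum ≠ 0})
    (hA : ∀ n : ℕ, (PowerSeries.coeff n) A =
      Nat.card {w : List ℤ // IsDyckWord w ∧ w.length = 2 * n ∧
        Avoids pUUU w ∧ Avoids pDUD w ∧ (w = [] ∨ pUUD <+: w)}) :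
    K = 1 + X * (A - 1 + X * A) * K := by
  obtain rfl : K = dyckGF KConstraint := ext fun n => (hK n).trans (coeff_dyckGF _ n).symm
  obtain rfl : A = dyckGF AConstraint := ext fun n => (hA n).trans (coeff_dyckGF _ n).symm
  linear_combination dyckGF_kConstraint + X * dyckGF KConstraint * dyckGF_bConstraint -
    X * dyckGF KConstraint * dyckGF_aConstraint
end
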